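/- arXiv:2412.04288 — 4 statements merged into one kernel-verified Lean document; each statement's English description precedes it below -/
import Mathlib

section
/- Let ≤ be the well-order on nonzero integers transported from ℕ via μ(−n)=2n, μ(p)=2p−1. For strictly increasing (in this order) tuples (i₁,...,i_p) and (j₁,...,j_p) of nonzero integers all distinct from p+1, the tuple (i₁,...,i_p) precedes (j₁,...,j_p) lexicographically if and only if the tuple obtained by inserting p+1 into each at its correct position (preserving the order) satisfies the same lexicographic comparison. -/
/-- The map `μ` on nonzero integers: `μ(-n) = 2n`, `μ(p) = 2p - 1` for positive `n, p`. -/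
def muMap (z : ℤ) : ℤ := if 0 < z then 2 * z - 1 else -(2 * z)

/-- The well-order on nonzero integers transported from ℕ via `μ`. -/
def muLT (a b : ℤ) : Prop := muMap a < muMap b

/-- A tuple of (nonzero) integers is strictly increasing in the `μ`-order. -/
def MuStrictIncr {p : ℕ} (f : Fin p → ℤ) : Prop :=
  ∀ a b : Fin p, a < b → muLT (f a) (f b)

/-- Lexicographic comparison (reading from the left) of tuples, using the `μ`-order. -/
def MuLexLT {p : ℕ} (f g : Fin p → ℤ) : Prop :=
  ∃ K : Fin p, (∀ l : Fin p, l < K → f l = g l) ∧ muLT (f K) (g K)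

/-! Since `μ` is injective, we may replace every tuple by its image under `μ` and work with
strictly increasing tuples in a linear order. Two such tuples `f`, `g` of the same length compare
lexicographically as the least element of the symmetric difference of their ranges decides:
`f < g` iff that element lies in the range of `f`. Adding the same new value `p + 1` to both
ranges leaves the symmetric difference unchanged, and its least element is not `p + 1`. -/

open Set
open scoped symmDiff

theorem insert_symmDiff_insert_of_notMem {α : Type*} {s t : Set α} {a : α} (hs : a ∉ s)
    (ht : a ∉ t) : insert a s ∆ insert a t = s ∆ t := by
  ext x
  rcases eq_or_ne x a with rfl | hx
  · simp [hs, ht, mem_symmDiff]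
  · simp [hx, mem_symmDiff]

section SortedTuples

variable {α : Type*} [LinearOrder α] {n : ℕ} {f g : Fin n → α}

theorem exists_isLeast_symmDiff_range_of_toLex_lt (hf : StrictMono f) (hg : StrictMono g)
    (hlt : toLex f < toLex g) : ∃ m ∈ range f, IsLeast (range f ∆ range g) m := by
  obtain ⟨K, hagree, hK⟩ := hlt
  have hKg : f K ∉ range g := by
    rintro ⟨l, hl⟩
    rcases lt_or_ge l K with h | h
    · exact h.ne (hf.injective ((hagree l h).trans hl))
    · exact (hK.trans_le (hg.monotone h)).ne' hl
  refine ⟨f K, mem_range_self K, Or.inl ⟨mem_range_self K, hKg⟩, ?_⟩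
  rintro x (⟨⟨l, rfl⟩, hx⟩ | ⟨⟨l, rfl⟩, hx⟩)
  · refine hf.monotone (not_lt.1 fun h => hx ?_)
    exact ⟨l, (hagree l h).symm⟩
  · refine hK.le.trans (hg.monotone (not_lt.1 fun h => hx ?_))
    exact ⟨l, hagree l h⟩

theorem toLex_lt_iff_exists_isLeast_symmDiff_range (hf : StrictMono f) (hg : StrictMono g) :
    toLex f < toLex g ↔ ∃ m ∈ range f, IsLeast (range f ∆ range g) m := by
  refine ⟨exists_isLeast_symmDiff_range_of_toLex_lt hf hg, fun ⟨m, hmf, hm⟩ => ?_⟩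
  -- The least element of the symmetric difference is unique, so it cannot also lie in `range g`.
  rcases lt_trichotomy (toLex f) (toLex g) with hlt | heq | hgt
  · exact hlt
  · cases toLex_inj.1 heq
    simpa using hm.1
  · obtain ⟨m', hm'g, hm'⟩ := exists_isLeast_symmDiff_range_of_toLex_lt hg hf hgt
    rw [symmDiff_comm] at hm'
    cases hm.unique hm'
    rcases hm.1 with ⟨_, h⟩ | ⟨_, h⟩ <;> contradiction

theorem toLex_lt_iff_of_range_eq_insert {m : ℕ} {f' g' : Fin m → α} {q : α}
    (hf : StrictMono f) (hg : StrictMono g) (hf' : StrictMono f') (hg' : StrictMono g')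
    (hqf : q ∉ range f) (hqg : q ∉ range g)
    (hrf : range f' = insert q (range f)) (hrg : range g' = insert q (range g)) :
    toLex f < toLex g ↔ toLex f' < toLex g' := by
  rw [toLex_lt_iff_exists_isLeast_symmDiff_range hf hg,
    toLex_lt_iff_exists_isLeast_symmDiff_range hf' hg', hrf, hrg,
    insert_symmDiff_insert_of_notMem hqf hqg]
  refine exists_congr fun x => and_congr_left fun hx => ?_
  have hxq : x ≠ q := by
    rintro rfl
    rcases hx.1 with ⟨h, _⟩ | ⟨h, _⟩ <;> contradiction
  simp [hxq]

end SortedTuples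

theorem muMap_injective : Function.Injective muMap := by
  intro a b h
  unfold muMap at h
  split_ifs at h <;> omega

theorem MuStrictIncr.strictMono_muMap_comp {n : ℕ} {f : Fin n → ℤ} (hf : MuStrictIncr f) :
    StrictMono (muMap ∘ f) :=
  fun a b h => hf a b h

theorem muLexLT_iff_toLex_lt {n : ℕ} {f g : Fin n → ℤ} :
    MuLexLT f g ↔ toLex (muMap ∘ f) < toLex (muMap ∘ g) :=
  exists_congr fun _ => and_congr_left fun _ =>
    forall₂_congr fun _ _ => muMap_injective.eq_iff.symm

theorem range_muMap_comp_of_range_eq_union_singleton {n m : ℕ} {f : Fin n → ℤ} {f' : Fin m → ℤ}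
    {q : ℤ} (h : range f' = range f ∪ {q}) :
    range (muMap ∘ f') = insert (muMap q) (range (muMap ∘ f)) := by
  rw [range_comp, range_comp, h, image_union, image_singleton, union_singleton]

theorem muMap_notMem_range_comp {n : ℕ} {f : Fin n → ℤ} {q : ℤ} (h : ∀ a, f a ≠ q) :
    muMap q ∉ range (muMap ∘ f) := by
  rintro ⟨a, ha⟩
  exact h a (muMap_injective ha)

theorem stmt_2_general (p : ℕ) (i j : Fin p → ℤ)
    (hi : MuStrictIncr i) (hj : MuStrictIncr j)
    (hip : ∀ a, i a ≠ (p : ℤ) + 1) (hjp : ∀ a, j a ≠ (p : ℤ) + 1)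
    (i' j' : Fin (p + 1) → ℤ)
    (hi' : MuStrictIncr i') (hj' : MuStrictIncr j')
    (hri : Set.range i' = Set.range i ∪ {(p : ℤ) + 1})
    (hrj : Set.range j' = Set.range j ∪ {(p : ℤ) + 1}) :
    MuLexLT i j ↔ MuLexLT i' j' := by
  rw [muLexLT_iff_toLex_lt, muLexLT_iff_toLex_lt]
  exact toLex_lt_iff_of_range_eq_insert hi.strictMono_muMap_comp hj.strictMono_muMap_comp
    hi'.strictMono_muMap_comp hj'.strictMono_muMap_comp
    (muMap_notMem_range_comp hip) (muMap_notMem_range_comp hjp)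
    (range_muMap_comp_of_range_eq_union_singleton hri)
    (range_muMap_comp_of_range_eq_union_singleton hrj)

/-- Lemma 2 of the paper: for strictly `μ`-increasing tuples `(i₁,…,i_p)` and `(j₁,…,j_p)` of
nonzero integers, all distinct from `p+1`, inserting `p+1` into each tuple at its correct
position (i.e. passing to the strictly `μ`-increasing `(p+1)`-tuples whose underlying sets are
the original ones together with `p+1`) preserves and reflects the lexicographic comparison. -/
theorem stmt_2 (p : ℕ) (i j : Fin p → ℤ)
    (hi : MuStrictIncr i) (hj : MuStrictIncr j)
    (hi0 : ∀ a, i a ≠ 0) (hj0 : ∀ a, j a ≠ 0)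
    (hip : ∀ a, i a ≠ (p : ℤ) + 1) (hjp : ∀ a, j a ≠ (p : ℤ) + 1)
    (i' j' : Fin (p + 1) → ℤ)
    (hi' : MuStrictIncr i') (hj' : MuStrictIncr j')
    (hri : Set.range i' = Set.range i ∪ {(p : ℤ) + 1})
    (hrj : Set.range j' = Set.range j ∪ {(p : ℤ) + 1}) :
    MuLexLT i j ↔ MuLexLT i' j' :=
  stmt_2_general p i j hi hj hip hjp i' j' hi' hj' hri hrj
end

section
/- Let σ be a finitely supported permutation of the nonzero integers, and let n ≠ m be integers ≥ 3. If σ maps the set {−2} ∪ {k : k ≥ 2} to either {−2} ∪ {k : k ≥ 2} or {−(m−1), ..., −1, 1} ∪ {k : k ≥ m+1} (where the cofinite parts agree appropriately), and similarly for the complementary sets, then σ({2, 3, ..., n}) equals either {2, 3, ..., m} or {−(m−1), −(m−2), ..., −3, −1, 1}; in either case this forces n = m, a contradiction. -/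
/-!
Since `σ` is a bijection, `σ({2, …, n}) = σ(A' \ B'_n) = σ(A') \ σ(B'_n)`, which by hypothesis
is `A' \ B'_m = {2, …, m}` or `B'_m \ A' = {-(m-1), …, -3, -1, 1}`. Both have `m - 1`
elements while `{2, …, n}` has `n - 1`, so `n = m`.
-/

/-- The cofinite modification of `A_n`: `{-2, 2, 3, …, n, n+1, …} = {-2} ∪ {k ≥ 2}`. -/
def setA' : Set ℤ := {-2} ∪ {k : ℤ | 2 ≤ k}

/-- The cofinite modification of `B_n`: `{-(n-1), …, -1, 1, n+1, n+2, …}`. -/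
def setB' (n : ℤ) : Set ℤ := {k : ℤ | -(n - 1) ≤ k ∧ k ≤ -1} ∪ {1} ∪ {k : ℤ | n + 1 ≤ k}

theorem Int.ncard_Icc (a b : ℤ) : (Set.Icc a b).ncard = (b + 1 - a).toNat := by
  rw [← Finset.coe_Icc, Set.ncard_coe_finset, Int.card_Icc]

theorem setA'_sdiff_setB' {n : ℤ} (hn : 3 ≤ n) : setA' \ setB' n = Set.Icc 2 n := by
  ext k
  simp only [setA', setB', Set.mem_sdiff, Set.mem_union, Set.mem_singleton_iff,
    Set.mem_ofPred_eq, Set.mem_Icc]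
  omega

theorem setB'_sdiff_setA' {m : ℤ} (hm : 3 ≤ m) :
    setB' m \ setA' = Set.Icc (-(m - 1)) (-3) ∪ {-1, 1} := by
  ext k
  simp only [setA', setB', Set.mem_sdiff, Set.mem_union, Set.mem_insert_iff,
    Set.mem_singleton_iff, Set.mem_ofPred_eq, Set.mem_Icc]
  omega

theorem ncard_setB'_sdiff_setA' {m : ℤ} (hm : 3 ≤ m) :
    (setB' m \ setA').ncard = (m - 1).toNat := by
  have hdisj : Disjoint (Set.Icc (-(m - 1)) (-3)) ({-1, 1} : Set ℤ) := by
    simp only [Set.disjoint_insert_right, Set.disjoint_singleton_right, Set.mem_Icc]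
    omega
  rw [setB'_sdiff_setA' hm, Set.ncard_union_eq hdisj, Int.ncard_Icc, Set.ncard_pair (by norm_num)]
  omega

theorem stmt_5_general (n m : ℤ) (hn : 3 ≤ n) (hm : 3 ≤ m)
    (σ : Equiv.Perm ℤ)
    (h : (σ '' setA' = setA' ∧ σ '' setB' n = setB' m) ∨
         (σ '' setA' = setB' m ∧ σ '' setB' n = setA')) :
    (σ '' {k : ℤ | 2 ≤ k ∧ k ≤ n} = {k : ℤ | 2 ≤ k ∧ k ≤ m} ∨
     σ '' {k : ℤ | 2 ≤ k ∧ k ≤ n} =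
       {k : ℤ | -(m - 1) ≤ k ∧ k ≤ -3} ∪ {-1, 1}) ∧ n = m := by
  have himage : σ '' Set.Icc 2 n = σ '' setA' \ σ '' setB' n := by
    rw [← setA'_sdiff_setB' hn, Set.image_sdiff σ.injective]
  have hcard : (σ '' Set.Icc 2 n).ncard = (n - 1).toNat := by
    rw [Set.ncard_image_of_injective _ σ.injective, Int.ncard_Icc]
    omega
  rcases h with ⟨hA, hB⟩ | ⟨hA, hB⟩
  · rw [hA, hB, setA'_sdiff_setB' hm] at himage
    rw [himage, Int.ncard_Icc] at hcard
    exact ⟨Or.inl himage, by omega⟩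
  · rw [hA, hB] at himage
    rw [himage, ncard_setB'_sdiff_setA' hm] at hcard
    exact ⟨Or.inr (himage.trans (setB'_sdiff_setA' hm)), by omega⟩

/-- The set-theoretic computation in the proof of Proposition 3.1: if a finitely supported
permutation `σ` of the nonzero integers maps `{-2} ∪ {k ≥ 2}` to either `{-2} ∪ {k ≥ 2}` or
`{-(m-1), …, -1, 1} ∪ {k ≥ m+1}`, and the set `{-(n-1), …, -1, 1} ∪ {k ≥ n+1}` to the
complementary one, then `σ({2, 3, …, n})` equals either `{2, 3, …, m}` or
`{-(m-1), -(m-2), …, -3, -1, 1}`; comparing cardinalities (`n-1` versus `m-1`) this forces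
`n = m` — a contradiction when `n ≠ m`. -/
theorem stmt_5 (n m : ℤ) (hn : 3 ≤ n) (hm : 3 ≤ m)
    (σ : Equiv.Perm ℤ) (hσ0 : σ 0 = 0) (hfin : {z : ℤ | σ z ≠ z}.Finite)
    (h : (σ '' setA' = setA' ∧ σ '' setB' n = setB' m) ∨
         (σ '' setA' = setB' m ∧ σ '' setB' n = setA')) :
    (σ '' {k : ℤ | 2 ≤ k ∧ k ≤ n} = {k : ℤ | 2 ≤ k ∧ k ≤ m} ∨
     σ '' {k : ℤ | 2 ≤ k ∧ k ≤ n} =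
       {k : ℤ | -(m - 1) ≤ k ∧ k ≤ -3} ∪ {-1, 1}) ∧ n = m :=
  stmt_5_general n m hn hm σ h
end

section
/- Let X be a countable set with a well-order and let a group G act on X. Define the quasi-order |_G on monomials over X by u |_G v iff there exist σ ∈ G and a monomial w with (σu)·w = v. If the monomials a_n·b_n (n ≥ 3), where a_n and b_n are squarefree monomials with variable sets A_n = {x_{−2}, x_2, ..., x_n} and B_n = {x_{−(n−1)},...,x_{−1}, x_1, x_{n+1}} respectively, form an antichain under |_{S_∞}, then the polynomial ring k[X] over any field k contains a strictly ascending chain of S_∞-stable ideals. -/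
/-- The set `X` of basis wedge-monomials, identified with the finite subsets of the nonzero
integers (the index sets of the wedge monomials `x_{i₁} ∧ … ∧ x_{i_p}`). -/
abbrev WedgeVar : Type := {s : Finset ℤ // (0 : ℤ) ∉ s}

/-- The action of a permutation `σ` of the integers fixing `0` on wedge-monomial variables,
by permuting indices. -/
def varMap (σ : Equiv.Perm ℤ) (h0 : σ 0 = 0) (s : WedgeVar) : WedgeVar :=
  ⟨s.1.image σ, by
    intro h
    obtain ⟨a, ha, hA⟩ := Finset.mem_image.mp h
    exact s.2 ((σ.injective (hA.trans h0.symm)) ▸ ha)⟩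

/-- The index set of `a_n = x_{-2} ∧ x_2 ∧ … ∧ x_n` as a wedge-monomial variable. -/
noncomputable def varA (n : ℤ) : WedgeVar :=
  ⟨insert (-2) (Finset.Icc 2 n), by simp⟩

/-- The index set of `b_n = x_{-(n-1)} ∧ … ∧ x_{-1} ∧ x_1 ∧ x_{n+1}` as a wedge-monomial
variable. -/
noncomputable def varB (n : ℤ) (hn : 3 ≤ n) : WedgeVar :=
  ⟨insert 1 (insert (n + 1) (Finset.Icc (-(n - 1)) (-1))), by
    simp only [Finset.mem_insert, Finset.mem_Icc]
    omega⟩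

/-- The squarefree monomial `a_n · b_n`, as a finitely supported exponent vector. -/
noncomputable def monAB (n : ℤ) (hn : 3 ≤ n) : WedgeVar →₀ ℕ :=
  Finsupp.single (varA n) 1 + Finsupp.single (varB n hn) 1

/-- The quasi-order `u |_{S_∞} v`: there are `σ ∈ S_∞` (a finitely supported permutation of
the nonzero integers) and a monomial `w` with `(σ u) · w = v`. -/
def MonDvd (u v : WedgeVar →₀ ℕ) : Prop :=
  ∃ σ : Equiv.Perm ℤ, ∃ h0 : σ 0 = 0, {z : ℤ | σ z ≠ z}.Finite ∧
    ∃ w : WedgeVar →₀ ℕ, Finsupp.mapDomain (varMap σ h0) u + w = v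

/-!
For monomials `m₀, m₁, …` that form an antichain under divisibility up to the action, let `Jᵢ` be
the ideal generated by the orbits of `m₀, …, mᵢ`. Each `Jᵢ` is stable, and `mᵢ₊₁ ∉ Jᵢ` because
a monomial lies in a monomial ideal only if some generator divides it, which the antichain
condition forbids.
-/

open MvPolynomial

namespace MvPolynomial

variable {R G X : Type*} [CommSemiring R] [Monoid G] [MulAction G X]

variable (R G) in
noncomputable def orbitMonomialIdeal (S : Set (X →₀ ℕ)) : Ideal (MvPolynomial X R) :=
  Ideal.span ((fun t => monomial t 1) '' {t | ∃ g : G, ∃ s ∈ S, s.mapDomain (g • ·) = t})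

variable {S : Set (X →₀ ℕ)}

theorem rename_smul_mem_orbitMonomialIdeal (g : G) {p : MvPolynomial X R}
    (hp : p ∈ orbitMonomialIdeal R G S) : rename (g • ·) p ∈ orbitMonomialIdeal R G S := by
  have hmap : rename (g • ·) p ∈
      (orbitMonomialIdeal R G S).map (rename (R := R) (g • · : X → X)) :=
    Ideal.mem_map_of_mem _ hp
  rw [orbitMonomialIdeal, Ideal.map_span] at hmap
  refine Ideal.span_le.mpr ?_ hmap
  rintro _ ⟨_, ⟨_, ⟨h, s, hs, rfl⟩, rfl⟩, rfl⟩
  refine Ideal.subset_span ⟨_, ⟨g * h, s, hs, rfl⟩, ?_⟩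
  simp only [rename_monomial, ← Finsupp.mapDomain_comp, mul_smul]
  rfl

theorem monomial_mem_orbitMonomialIdeal_iff [Nontrivial R] {t : X →₀ ℕ} :
    monomial t (1 : R) ∈ orbitMonomialIdeal R G S ↔
      ∃ g : G, ∃ s ∈ S, s.mapDomain (g • ·) ≤ t := by
  classical
  rw [orbitMonomialIdeal, mem_ideal_span_monomial_image, support_monomial, if_neg one_ne_zero]
  simp only [Finset.mem_singleton, forall_eq, Set.mem_ofPred_eq]
  constructor
  · rintro ⟨_, ⟨g, s, hs, rfl⟩, hle⟩
    exact ⟨g, s, hs, hle⟩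
  · rintro ⟨g, s, hs, hle⟩
    exact ⟨_, ⟨g, s, hs, rfl⟩, hle⟩

variable (R G) in
theorem strictMono_orbitMonomialIdeal [Nontrivial R] (m : ℕ → X →₀ ℕ)
    (hm : ∀ i j, i < j → ∀ g : G, ¬ (m i).mapDomain (g • ·) ≤ m j) :
    StrictMono fun n => orbitMonomialIdeal R G (m '' Set.Iic n) := by
  refine strictMono_nat_of_lt_succ fun n => lt_of_le_of_ne ?_ fun heq => ?_
  · refine Ideal.span_mono (Set.image_mono ?_)
    rintro _ ⟨g, _, ⟨i, hi, rfl⟩, rfl⟩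
    exact ⟨g, m i, ⟨i, Set.mem_Iic.mpr (Nat.le_succ_of_le hi), rfl⟩, rfl⟩
  · have hnew : monomial (m (n + 1)) (1 : R) ∈ orbitMonomialIdeal R G (m '' Set.Iic (n + 1)) :=
      monomial_mem_orbitMonomialIdeal_iff.mpr ⟨1, m (n + 1), ⟨n + 1, Set.mem_Iic.mpr le_rfl, rfl⟩,
        by simp only [one_smul]; exact Finsupp.mapDomain_id.le⟩
    rw [← heq, monomial_mem_orbitMonomialIdeal_iff] at hnew
    obtain ⟨g, _, ⟨i, hi, rfl⟩, hle⟩ := hnew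
    exact hm i (n + 1) (Nat.lt_succ_of_le hi) g hle

end MvPolynomial

theorem Equiv.Perm.setOf_mul_apply_ne_subset {α : Type*} (σ τ : Equiv.Perm α) :
    {z | (σ * τ) z ≠ z} ⊆ {z | σ z ≠ z} ∪ {z | τ z ≠ z} := by
  intro z hz
  by_contra hfix
  simp only [Set.mem_union, Set.mem_ofPred_eq, not_or, not_not] at hfix
  exact hz (by rw [Equiv.Perm.mul_apply, hfix.2, hfix.1])

theorem Equiv.Perm.setOf_inv_apply_ne {α : Type*} (σ : Equiv.Perm α) :
    {z | σ⁻¹ z ≠ z} = {z | σ z ≠ z} := by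
  ext z
  simp only [Set.mem_ofPred_eq, ne_eq, Equiv.Perm.inv_eq_iff_eq]
  exact not_congr eq_comm

/-- The group `S_∞` of the paper. -/
def finitaryPerm : Subgroup (Equiv.Perm ℤ) where
  carrier := {σ | σ 0 = 0 ∧ {z | σ z ≠ z}.Finite}
  mul_mem' := fun ⟨hσ0, hσ⟩ ⟨hτ0, hτ⟩ =>
    ⟨by simp [hσ0, hτ0], (hσ.union hτ).subset (Equiv.Perm.setOf_mul_apply_ne_subset _ _)⟩
  one_mem' := ⟨rfl, by simp⟩
  inv_mem' := fun ⟨hσ0, hσ⟩ =>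
    ⟨Equiv.Perm.inv_eq_iff_eq.mpr hσ0.symm, (Equiv.Perm.setOf_inv_apply_ne _).symm ▸ hσ⟩

lemma varMap_mul (σ τ : Equiv.Perm ℤ) (hσ : σ 0 = 0) (hτ : τ 0 = 0) :
    varMap (σ * τ) (by simp [hτ, hσ]) = varMap σ hσ ∘ varMap τ hτ := by
  funext s
  exact Subtype.ext (by simp only [varMap, Function.comp_apply, Finset.image_image]; rfl)

lemma varMap_one : varMap 1 rfl = id := by
  funext s
  exact Subtype.ext (by simp [varMap])

instance : MulAction finitaryPerm WedgeVar where
  smul σ := varMap σ σ.2.1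
  one_smul := congrFun varMap_one
  mul_smul σ τ := congrFun (varMap_mul σ τ σ.2.1 τ.2.1)

/-- Aschenbrenner–Hillar style implication used in Proposition 3.1 of the paper: if the
monomials `a_n · b_n` (`n ≥ 3`) form an antichain under `|_{S_∞}`, then the polynomial ring
`k[X]` on the wedge-monomial variables over any field `k` contains a strictly ascending chain
of `S_∞`-stable ideals. -/
theorem stmt_18 (k : Type*) [Field k]
    (h : ∀ (n m : ℤ) (hn : 3 ≤ n) (hm : 3 ≤ m), n ≠ m →
      ¬ MonDvd (monAB n hn) (monAB m hm)) :
    ∃ J : ℕ → Ideal (MvPolynomial WedgeVar k), StrictMono J ∧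
      ∀ (i : ℕ) (σ : Equiv.Perm ℤ) (h0 : σ 0 = 0), {z : ℤ | σ z ≠ z}.Finite →
        ∀ f ∈ J i, MvPolynomial.rename (varMap σ h0) f ∈ J i := by
  let m : ℕ → WedgeVar →₀ ℕ := fun i => monAB (i + 3) (by omega)
  refine ⟨fun n => orbitMonomialIdeal k finitaryPerm (m '' Set.Iic n), ?_, ?_⟩
  · refine strictMono_orbitMonomialIdeal k finitaryPerm m fun i j hij σ hle => ?_
    obtain ⟨w, hw⟩ := le_iff_exists_add.mp hle
    exact h _ _ _ _ (by omega) ⟨σ, σ.2.1, σ.2.2, w, hw.symm⟩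
  · intro i σ h0 hfin f hf
    exact rename_smul_mem_orbitMonomialIdeal (⟨σ, h0, hfin⟩ : finitaryPerm) hf
end

section
/- For g in the opposite unipotent radical U⁻ (so g(x*_i) = x*_i + Σ_j α_i^j(g) x*_{−j}, g(x*_{−j}) = x*_{−j}), the pairing of g(x₁*∧...∧x_p*) against the monomial a_ℓ·b_ℓ evaluates to ±α₁² · det(α^{1,...,ℓ−1}_{2,3,...,ℓ}), i.e., the product of the entry α₁² with the (ℓ−1)×(ℓ−1) minor of the matrix (α_i^j) with row indices {2,3,...,ℓ} and column (superscript) indices {1,...,ℓ−1}, and this polynomial in the variables α_i^j is not identically zero. -/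
/-!
Under `g ∈ U⁻` the form `g(x*_i)` pairs with `x_{-j}` to `α_i^j` and with `x_{i'}` to
`δ_{ii'}`. Hence each pairing matrix has identity columns at the positive basis vectors past
its first block and is block lower triangular. For `a_ℓ` the surviving block is the `1 × 1`
matrix `(α_1^2)`; for `b_ℓ` it is an `ℓ × ℓ` matrix whose last column is `e_1`, and expanding
along that column leaves `±` the minor of `α` on rows `2, …, ℓ` and columns `1, …, ℓ-1`.
Taking `α_1^2 = 1` and that minor equal to the identity shows the product is not identically
zero.
-/

/-- The vector space `V_{m-1,p}` (`p = m+1`) over `k`, with basis indexed by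
`{x_{-1}, …, x_{-(m-1)}} ⊔ {x_1, …, x_p}`. -/
abbrev Vm (k : Type*) [Field k] (m : ℕ) : Type _ := (Fin (m - 1) ⊕ Fin (m + 1)) → k

/-- The basis vector `x_{-j}` of `V_{m-1,m+1}` (here `j : Fin (m-1)` encodes `x_{-(j+1)}`). -/
noncomputable def xneg (k : Type*) [Field k] (m : ℕ) (j : Fin (m - 1)) : Vm k m :=
  Pi.single (Sum.inl j) 1

/-- The basis vector `x_i` of `V_{m-1,m+1}` (here `i : Fin (m+1)` encodes `x_{i+1}`). -/
noncomputable def xpos (k : Type*) [Field k] (m : ℕ) (i : Fin (m + 1)) : Vm k m :=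
  Pi.single (Sum.inr i) 1

/-- The dual basis vector `x*_{-j}`. -/
noncomputable def cneg (k : Type*) [Field k] (m : ℕ) (j : Fin (m - 1)) :
    Module.Dual k (Vm k m) := LinearMap.proj (Sum.inl j)

/-- The dual basis vector `x*_i`. -/
noncomputable def cpos (k : Type*) [Field k] (m : ℕ) (i : Fin (m + 1)) :
    Module.Dual k (Vm k m) := LinearMap.proj (Sum.inr i)

/-- `g(x*_i) = x*_i + ∑_j α_i^j x*_{-j}`, for `g ∈ U⁻` with matrix entries `α`. -/
noncomputable def gdual (k : Type*) [Field k] (m : ℕ) (α : Fin (m + 1) → Fin (m - 1) → k)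
    (i : Fin (m + 1)) : Module.Dual k (Vm k m) :=
  cpos k m i + ∑ j, α i j • cneg k m j

/-- The tuple of basis vectors of the completed wedge monomial
`a_ℓ = x_{-2} ∧ x_2 ∧ x_3 ∧ … ∧ x_p`. -/
noncomputable def vA (k : Type*) [Field k] (m : ℕ) (hm : 3 ≤ m) :
    Fin (m + 1) → Vm k m := fun s =>
  if (s : ℕ) = 0 then xneg k m ⟨1, by omega⟩ else xpos k m s

/-- The tuple of basis vectors of the completed wedge monomial
`b_ℓ = x_{-(ℓ-1)} ∧ … ∧ x_{-1} ∧ x_1 ∧ x_{ℓ+1} ∧ … ∧ x_p`. -/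
noncomputable def vB (k : Type*) [Field k] (ℓ m : ℕ) (hℓ : 2 ≤ ℓ) (hm : ℓ ≤ m) :
    Fin (m + 1) → Vm k m := fun s =>
  if h : (s : ℕ) < ℓ - 1 then xneg k m ⟨s, by omega⟩
  else if (s : ℕ) = ℓ - 1 then xpos k m ⟨0, by omega⟩
  else xpos k m s

namespace Matrix

variable {R : Type*} [CommRing R]

theorem det_eq_det_submatrix_castLE_of_apply_eq_one_apply {n a : ℕ} (h : a ≤ n)
    (M : Matrix (Fin n) (Fin n) R)
    (hM : ∀ i j : Fin n, a ≤ (j : ℕ) → M i j = (1 : Matrix (Fin n) (Fin n) R) i j) :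
    M.det = (M.submatrix (Fin.castLE h) (Fin.castLE h)).det := by
  obtain ⟨b, rfl⟩ := Nat.exists_eq_add_of_le h
  rw [← det_reindex_self finSumFinEquiv.symm]
  set N := reindex finSumFinEquiv.symm finSumFinEquiv.symm M
  have h₁₂ : N.toBlocks₁₂ = 0 := by
    ext i j
    simpa [N, toBlocks₁₂, one_apply, Fin.ext_iff, show (i : ℕ) ≠ a + j by omega] using
      hM (Fin.castAdd b i) (Fin.natAdd a j) (by simp)
  have h₂₂ : N.toBlocks₂₂ = 1 := by
    ext i j
    simpa [N, toBlocks₂₂, one_apply] using hM (Fin.natAdd a i) (Fin.natAdd a j) (by simp)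
  rw [← fromBlocks_toBlocks N, h₁₂, h₂₂, det_fromBlocks_zero₁₂, det_one, mul_one]
  rfl

theorem det_succ_of_col_last_eq_single_zero {n : ℕ} (M : Matrix (Fin (n + 1)) (Fin (n + 1)) R)
    (hM : ∀ i, M i (Fin.last n) = (Pi.single 0 1 : Fin (n + 1) → R) i) :
    M.det = (-1) ^ n * (M.submatrix Fin.succ Fin.castSucc).det := by
  rw [det_succ_column M (Fin.last n), Fintype.sum_eq_single 0 fun i hi => by simp [hM, hi]]
  simp [hM]

end Matrix

open Matrix

section Pairing

variable (k : Type*) [Field k] (m : ℕ) (α : Fin (m + 1) → Fin (m - 1) → k)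

@[simp]
lemma gdual_xneg (i : Fin (m + 1)) (j : Fin (m - 1)) : gdual k m α i (xneg k m j) = α i j := by
  simp [gdual, cpos, cneg, xneg, Pi.single_apply]

@[simp]
lemma gdual_xpos (i i' : Fin (m + 1)) :
    gdual k m α i (xpos k m i') = (1 : Matrix (Fin (m + 1)) (Fin (m + 1)) k) i i' := by
  simp [gdual, cpos, cneg, xpos, Pi.single_apply, one_apply]

theorem det_gdual_vA (hm : 3 ≤ m) :
    (of fun r s => gdual k m α r (vA k m hm s)).det = α ⟨0, by omega⟩ ⟨1, by omega⟩ := by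
  rw [det_eq_det_submatrix_castLE_of_apply_eq_one_apply (show 1 ≤ m + 1 by omega) _
    fun r s hs => by rw [of_apply, vA, if_neg (by omega), gdual_xpos], det_unique]
  simp [vA]

theorem det_gdual_vB (ℓ : ℕ) (hℓ : 2 ≤ ℓ) (hm : ℓ ≤ m) :
    (of fun r s => gdual k m α r (vB k ℓ m hℓ hm s)).det =
      (-1) ^ (ℓ - 1) * (of fun i j : Fin (ℓ - 1) =>
        α ⟨j + 1, by have := j.isLt; omega⟩ ⟨i, by have := i.isLt; omega⟩).det := by
  rw [det_eq_det_submatrix_castLE_of_apply_eq_one_apply (show ℓ ≤ m + 1 by omega) _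
    fun r s hs => by
      simp [vB, show ¬ (s : ℕ) < ℓ - 1 by omega, show (s : ℕ) ≠ ℓ - 1 by omega]]
  obtain ⟨n, rfl⟩ : ∃ n, ℓ = n + 1 := ⟨ℓ - 1, by omega⟩
  rw [det_succ_of_col_last_eq_single_zero _ fun r => ?_]
  · rw [← det_transpose]
    congr 2
    ext i j
    rw [transpose_apply, submatrix_apply, submatrix_apply, of_apply, vB, dif_pos (by simp),
      gdual_xneg]
    rfl
  · rw [submatrix_apply, of_apply, vB, dif_neg (by simp), if_pos (by simp), gdual_xpos, one_apply]
    simp only [Pi.single_apply, Fin.ext_iff, Fin.val_castLE, Fin.val_zero]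

end Pairing

/-- For `g ∈ U⁻`, the pairing of `g(x₁* ∧ … ∧ x_p*)` against the monomial `a_ℓ · b_ℓ`
(product of the pairings against `a_ℓ` and `b_ℓ`, each computed as a determinant) equals
`± α₁² · det(α^{1,…,ℓ-1}_{2,3,…,ℓ})`, the product of the entry `α₁²` with the
`(ℓ-1) × (ℓ-1)` minor of `(α_i^j)` with row indices `{2,…,ℓ}` and column (superscript)
indices `{1,…,ℓ-1}`; moreover this polynomial in the variables `α_i^j` is not identically
zero: it takes a nonzero value for some `α`. -/
theorem stmt_19 (k : Type*) [Field k] (ℓ m : ℕ) (hℓ : 3 < ℓ) (hm : ℓ ≤ m) :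
    ∃ ε : k, (ε = 1 ∨ ε = -1) ∧
      (∀ α : Fin (m + 1) → Fin (m - 1) → k,
        Matrix.det (Matrix.of fun r s : Fin (m + 1) =>
            gdual k m α r (vA k m (by omega) s)) *
        Matrix.det (Matrix.of fun r s : Fin (m + 1) =>
            gdual k m α r (vB k ℓ m (by omega) hm s)) =
        ε * (α ⟨0, by omega⟩ ⟨1, by omega⟩ *
          Matrix.det (Matrix.of fun i j : Fin (ℓ - 1) =>
            α ⟨(j : ℕ) + 1, by have := j.isLt; omega⟩
              ⟨(i : ℕ), by have := i.isLt; omega⟩))) ∧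
      ∃ α : Fin (m + 1) → Fin (m - 1) → k,
        Matrix.det (Matrix.of fun r s : Fin (m + 1) =>
            gdual k m α r (vA k m (by omega) s)) *
        Matrix.det (Matrix.of fun r s : Fin (m + 1) =>
            gdual k m α r (vB k ℓ m (by omega) hm s)) ≠ 0 := by
  have pairing_eq : ∀ α : Fin (m + 1) → Fin (m - 1) → k,
      (of fun r s => gdual k m α r (vA k m (by omega) s)).det *
        (of fun r s => gdual k m α r (vB k ℓ m (by omega) hm s)).det =
      (-1) ^ (ℓ - 1) * (α ⟨0, by omega⟩ ⟨1, by omega⟩ *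
        (of fun i j : Fin (ℓ - 1) =>
          α ⟨j + 1, by have := j.isLt; omega⟩ ⟨i, by have := i.isLt; omega⟩).det) := by
    intro α
    rw [det_gdual_vA, det_gdual_vB]
    ring
  let α₀ : Fin (m + 1) → Fin (m - 1) → k := fun a b =>
    if (a : ℕ) = b + 1 ∨ (a : ℕ) = 0 then 1 else 0
  have minor_eq_one : (of fun i j : Fin (ℓ - 1) =>
      α₀ ⟨j + 1, by have := j.isLt; omega⟩ ⟨i, by have := i.isLt; omega⟩) = 1 := by
    ext i j
    simp only [of_apply, α₀, one_apply, Fin.ext_iff]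
    exact if_congr (by omega) rfl rfl
  refine ⟨(-1) ^ (ℓ - 1), neg_one_pow_eq_or k _, pairing_eq, α₀, ?_⟩
  rw [pairing_eq, minor_eq_one, det_one]
  simp [α₀]
end
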